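/- Let R be a commutative ring, M an R-module, and Q : QuadraticForm R M. Let H : QuadraticForm R (R × R) satisfy H (y, z) = y * z, let N : QuadraticForm R R satisfy N t = -t^2, and set Q' := (Q.prod H).prod N. Write x̄ := reverse (involute x) and Vec := LinearMap.range (Algebra.linearMap R (CliffordAlgebra Q)) ⊔ LinearMap.range (ι Q). Say (a, b, c, d) satisfies the SL₂ conditions if: a * reverse d - b * reverse c = 1; a * reverse b = b * reverse a and c * reverse d = d * reverse c; each of a*ā, b*b̄, c*c̄, d*d̄ lies in Set.range (algebraMap R (CliffordAlgebra Q)); a*c̄ ∈ Vec and b*d̄ ∈ Vec; for every x ∈ Vec, both a*x*b̄ + b*x̄*ā and c*x*d̄ + d*x̄*c̄ lie in Set.range (algebraMap R (CliffordAlgebra Q)); and for every x ∈ Vec, a*x*d̄ + b*x̄*c̄ ∈ Vec. Say that an element u of the even subalgebra CliffordAlgebra.even Q' lies in Spin if (as an element of CliffordAlgebra Q') u * reverse u = 1 and u * ι Q' m * reverse u ∈ LinearMap.range (ι Q') for every m. Then there exists an R-algebra isomorphism ψ : Matrix (Fin 2) (Fin 2) (CliffordAlgebra Q) ≃ₐ[R]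 CliffordAlgebra.even Q' such that (a, b, c, d) satisfies the SL₂ conditions if and only if ψ !![a, b; c, d] lies in Spin. -/
import Mathlib


/-- The submodule of Clifford vectors (paravectors): scalars plus the image of `ι`. -/
noncomputable def cliffordVec {R M : Type*} [CommRing R] [AddCommGroup M] [Module R M]
    (Q : QuadraticForm R M) : Submodule R (CliffordAlgebra Q) :=
  LinearMap.range (Algebra.linearMap R (CliffordAlgebra Q)) ⊔
    LinearMap.range (CliffordAlgebra.ι Q)

/-- Clifford conjugation `x̄ = reverse (involute x)`. -/
noncomputable def cliffordConj {R M : Type*} [CommRing R] [AddCommGroup M] [Module R M]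
    {Q : QuadraticForm R M} (x : CliffordAlgebra Q) : CliffordAlgebra Q :=
  CliffordAlgebra.reverse (CliffordAlgebra.involute x)

/-- The SL₂ conditions on a quadruple of elements of a Clifford algebra
(pseudo-determinant 1, symmetry, scalar norms, vector ratios, and the two
Möbius compatibility conditions). -/
def sl2Cond {R M : Type*} [CommRing R] [AddCommGroup M] [Module R M]
    (Q : QuadraticForm R M) (a b c d : CliffordAlgebra Q) : Prop :=
  a * CliffordAlgebra.reverse d - b * CliffordAlgebra.reverse c = 1 ∧
  a * CliffordAlgebra.reverse b = b * CliffordAlgebra.reverse a ∧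
  c * CliffordAlgebra.reverse d = d * CliffordAlgebra.reverse c ∧
  a * cliffordConj a ∈ Set.range (algebraMap R (CliffordAlgebra Q)) ∧
  b * cliffordConj b ∈ Set.range (algebraMap R (CliffordAlgebra Q)) ∧
  c * cliffordConj c ∈ Set.range (algebraMap R (CliffordAlgebra Q)) ∧
  d * cliffordConj d ∈ Set.range (algebraMap R (CliffordAlgebra Q)) ∧
  a * cliffordConj c ∈ cliffordVec Q ∧
  b * cliffordConj d ∈ cliffordVec Q ∧
  (∀ x ∈ cliffordVec Q,
    a * x * cliffordConj b + b * cliffordConj x * cliffordConj a ∈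
      Set.range (algebraMap R (CliffordAlgebra Q)) ∧
    c * x * cliffordConj d + d * cliffordConj x * cliffordConj c ∈
      Set.range (algebraMap R (CliffordAlgebra Q))) ∧
  (∀ x ∈ cliffordVec Q,
    a * x * cliffordConj d + b * cliffordConj x * cliffordConj c ∈ cliffordVec Q)

/-- Membership in the Spin group: an even element with spinor norm `u * u* = 1`
conjugating imaginary vectors into imaginary vectors. -/
def spinMem {R M' : Type*} [CommRing R] [AddCommGroup M'] [Module R M']
    (Q' : QuadraticForm R M') (u : CliffordAlgebra.even Q') : Prop :=
  (u : CliffordAlgebra Q') * CliffordAlgebra.reverse ((u : CliffordAlgebra Q')) = 1 ∧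
  ∀ m : M', (u : CliffordAlgebra Q') * CliffordAlgebra.ι Q' m *
      CliffordAlgebra.reverse ((u : CliffordAlgebra Q')) ∈
    LinearMap.range (CliffordAlgebra.ι Q')


namespace Sl2Spin

section conjLemmas
open CliffordAlgebra
variable {R M : Type*} [CommRing R] [AddCommGroup M] [Module R M] {Q : QuadraticForm R M}

theorem cliffordConj_algebraMap (r : R) :
    cliffordConj (Q := Q) (algebraMap R _ r) = algebraMap R _ r := by
  rw [cliffordConj, AlgHom.commutes, reverse.commutes]

theorem cliffordConj_one : cliffordConj (Q := Q) 1 = 1 := by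
  simpa using cliffordConj_algebraMap (Q := Q) 1

theorem cliffordConj_zero : cliffordConj (Q := Q) 0 = 0 := by
  rw [cliffordConj, map_zero, map_zero]

theorem cliffordConj_ι (m : M) : cliffordConj (ι Q m) = -ι Q m := by
  rw [cliffordConj, involute_ι, map_neg, reverse_ι]

theorem cliffordConj_add (x y : CliffordAlgebra Q) :
    cliffordConj (x + y) = cliffordConj x + cliffordConj y := by
  rw [cliffordConj, map_add, map_add]; rfl

theorem cliffordConj_sub (x y : CliffordAlgebra Q) :
    cliffordConj (x - y) = cliffordConj x - cliffordConj y := by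
  rw [cliffordConj, map_sub, map_sub]; rfl

theorem cliffordConj_neg (x : CliffordAlgebra Q) : cliffordConj (-x) = -cliffordConj x := by
  rw [cliffordConj, map_neg, map_neg]; rfl

theorem cliffordConj_mul (x y : CliffordAlgebra Q) :
    cliffordConj (x * y) = cliffordConj y * cliffordConj x := by
  rw [cliffordConj, map_mul, reverse.map_mul]; rfl

theorem cliffordConj_conj (x : CliffordAlgebra Q) : cliffordConj (cliffordConj x) = x := by
  rw [cliffordConj, cliffordConj, ← reverse_involute, involute_involute, reverse_reverse]

theorem involute_cliffordConj (x : CliffordAlgebra Q) :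
    involute (cliffordConj x) = reverse x := by
  rw [cliffordConj, reverse_involute, involute_involute]

theorem cliffordConj_reverse (x : CliffordAlgebra Q) :
    cliffordConj (reverse x) = involute x := by
  rw [cliffordConj, ← reverse_involute, reverse_reverse]

theorem mem_cliffordVec_iff {x : CliffordAlgebra Q} :
    x ∈ cliffordVec Q ↔ ∃ (r : R) (m : M), x = algebraMap R _ r + ι Q m := by
  constructor
  · intro hx
    rw [cliffordVec, Submodule.mem_sup] at hx
    obtain ⟨y, ⟨r, rfl⟩, z, ⟨m, rfl⟩, rfl⟩ := hx
    exact ⟨r, m, rfl⟩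
  · rintro ⟨r, m, rfl⟩
    rw [cliffordVec, Submodule.mem_sup]
    exact ⟨algebraMap R _ r, ⟨r, rfl⟩, ι Q m, ⟨m, rfl⟩, rfl⟩

theorem algebraMap_mem_cliffordVec (r : R) : algebraMap R _ r ∈ cliffordVec Q :=
  mem_cliffordVec_iff.mpr ⟨r, 0, by rw [map_zero, add_zero]⟩

theorem one_mem_cliffordVec : (1 : CliffordAlgebra Q) ∈ cliffordVec Q := by
  simpa using algebraMap_mem_cliffordVec (Q := Q) 1

theorem ι_mem_cliffordVec (m : M) : ι Q m ∈ cliffordVec Q :=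
  mem_cliffordVec_iff.mpr ⟨0, m, by rw [map_zero, zero_add]⟩

theorem involute_mem_cliffordVec {x : CliffordAlgebra Q} (hx : x ∈ cliffordVec Q) :
    involute x ∈ cliffordVec Q := by
  obtain ⟨r, m, rfl⟩ := mem_cliffordVec_iff.mp hx
  rw [map_add, AlgHom.commutes, involute_ι, ← map_neg (ι Q)]
  exact mem_cliffordVec_iff.mpr ⟨r, -m, rfl⟩

theorem cliffordConj_mem_cliffordVec {x : CliffordAlgebra Q} (hx : x ∈ cliffordVec Q) :
    cliffordConj x ∈ cliffordVec Q := by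
  obtain ⟨r, m, rfl⟩ := mem_cliffordVec_iff.mp hx
  rw [cliffordConj_add, cliffordConj_algebraMap, cliffordConj_ι, ← map_neg (ι Q)]
  exact mem_cliffordVec_iff.mpr ⟨r, -m, rfl⟩

theorem range_algebraMap_eq_bot :
    Set.range (algebraMap R (CliffordAlgebra Q)) = ((⊥ : Subalgebra R (CliffordAlgebra Q)) : Set _) := by
  rw [Algebra.coe_bot]

end conjLemmas

section spinTransport
open CliffordAlgebra CliffordAlgebra.EquivEven
variable {R M : Type*} [CommRing R] [AddCommGroup M] [Module R M] (Q : QuadraticForm R M)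

/-- The inclusion of the Clifford algebra into the Clifford algebra of the augmented space,
via the even subalgebra. -/
noncomputable def jmap : CliffordAlgebra Q →ₐ[R] CliffordAlgebra (Q' Q) :=
  (CliffordAlgebra.even (Q' Q)).val.comp (toEven Q)

theorem jmap_apply (b : CliffordAlgebra Q) : jmap Q b = ↑(toEven Q b) := rfl

theorem jmap_injective : Function.Injective (jmap Q) := by
  intro x y hxy
  have h2 : toEven Q x = toEven Q y := Subtype.coe_injective hxy
  exact (equivEven Q).injective h2

theorem e0_mul_jmap (b : CliffordAlgebra Q) :
    e0 Q * jmap Q b = jmap Q (involute b) * e0 Q := by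
  induction b using CliffordAlgebra.induction with
  | algebraMap r => rw [AlgHom.commutes, AlgHom.commutes, AlgHom.commutes, ← Algebra.commutes]
  | ι m =>
      rw [involute_ι, map_neg, jmap_apply, toEven_ι, neg_mul, e0_mul_v_mul_e0, ← mul_assoc,
        e0_mul_e0, neg_one_mul]
  | mul a b ha hb =>
      rw [map_mul, map_mul, map_mul, ← mul_assoc, ha, mul_assoc, hb, ← mul_assoc]
  | add a b ha hb => rw [map_add, map_add, map_add, mul_add, add_mul, ha, hb]

theorem e0_mul_ι' (x : M) (r : R) :
    e0 Q * ι (Q' Q) (x, r) = jmap Q (ι Q x) - algebraMap R _ r := by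
  rw [ι_eq_v_add_smul_e0, mul_add, mul_smul_comm, e0_mul_e0, jmap_apply, toEven_ι, smul_neg,
    ← Algebra.algebraMap_eq_smul_one, ← sub_eq_add_neg]

theorem mem_range_ι'_iff (y' : CliffordAlgebra (Q' Q)) :
    y' ∈ LinearMap.range (ι (Q' Q)) ↔ ∃ p ∈ cliffordVec Q, e0 Q * y' = jmap Q p := by
  constructor
  · rintro ⟨⟨x, r⟩, rfl⟩
    refine ⟨ι Q x - algebraMap R _ r, ?_, ?_⟩
    · exact mem_cliffordVec_iff.mpr ⟨-r, x, by rw [map_neg, neg_add_eq_sub]⟩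
    · rw [e0_mul_ι', map_sub, AlgHom.commutes]
  · rintro ⟨p, hp, hep⟩
    obtain ⟨s, x, rfl⟩ := mem_cliffordVec_iff.mp hp
    have hy : y' = -(e0 Q * (e0 Q * y')) := by
      rw [← mul_assoc, e0_mul_e0, neg_one_mul, neg_neg]
    rw [hep] at hy
    have h2 : e0 Q * jmap Q (algebraMap R _ s + ι Q x) = s • e0 Q - v Q x := by
      rw [map_add, mul_add, AlgHom.commutes, jmap_apply, toEven_ι, ← mul_assoc, e0_mul_e0,
        neg_one_mul, ← Algebra.commutes s (e0 Q), ← Algebra.smul_def, ← sub_eq_add_neg]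
    rw [h2, neg_sub] at hy
    refine ⟨(x, -s), ?_⟩
    rw [ι_eq_v_add_smul_e0, hy, neg_smul, ← sub_eq_add_neg]

theorem jmap_reverse (y : CliffordAlgebra Q) :
    CliffordAlgebra.reverse (jmap Q y) = jmap Q (cliffordConj y) :=
  (coe_toEven_reverse_involute Q y).symm

theorem involute_reverse_eq_conj (y : CliffordAlgebra Q) :
    involute (CliffordAlgebra.reverse y) = cliffordConj y := by
  rw [cliffordConj, reverse_involute]

theorem spinMem_equivEven_iff (y : CliffordAlgebra Q) :
    spinMem (Q' Q) (equivEven Q y) ↔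
      (y * cliffordConj y = 1 ∧
        ∀ p ∈ cliffordVec Q, y * p * CliffordAlgebra.reverse y ∈ cliffordVec Q) := by
  have hrev : CliffordAlgebra.reverse (jmap Q y) = jmap Q (cliffordConj y) := jmap_reverse Q y
  have key : ∀ (x : M) (r : R),
      (jmap Q y * ι (Q' Q) (x, r) * CliffordAlgebra.reverse (jmap Q y)
          ∈ LinearMap.range (ι (Q' Q))) ↔
        involute y * (ι Q x - algebraMap R _ r) * cliffordConj y ∈ cliffordVec Q := by
    intro x r
    rw [mem_range_ι'_iff]
    have hcalc : e0 Q * (jmap Q y * ι (Q' Q) (x, r) * CliffordAlgebra.reverse (jmap Q y))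
        = jmap Q (involute y * (ι Q x - algebraMap R _ r) * cliffordConj y) := by
      rw [hrev, ← mul_assoc, ← mul_assoc, e0_mul_jmap, mul_assoc (jmap Q (involute y)),
        e0_mul_ι', map_mul, map_mul, map_sub, AlgHom.commutes]
    rw [hcalc]
    constructor
    · rintro ⟨p, hp, hjp⟩
      exact jmap_injective Q hjp ▸ hp
    · intro hq
      exact ⟨_, hq, rfl⟩
  show (jmap Q y * CliffordAlgebra.reverse (jmap Q y) = 1 ∧
      ∀ m', jmap Q y * ι (Q' Q) m' * CliffordAlgebra.reverse (jmap Q y)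
        ∈ LinearMap.range (ι (Q' Q))) ↔ _
  refine and_congr ?_ ?_
  · rw [hrev, ← map_mul, ← map_one (jmap Q)]
    exact ⟨fun h => jmap_injective Q h, fun h => by rw [h]⟩
  · have hAB : (∀ m', jmap Q y * ι (Q' Q) m' * CliffordAlgebra.reverse (jmap Q y)
        ∈ LinearMap.range (ι (Q' Q))) ↔
        ∀ p ∈ cliffordVec Q, involute y * p * cliffordConj y ∈ cliffordVec Q := by
      constructor
      · intro h p hp
        obtain ⟨s, x, rfl⟩ := mem_cliffordVec_iff.mp hp
        have h2 := (key x (-s)).mp (h (x, -s))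
        rwa [map_neg, sub_neg_eq_add, add_comm] at h2
      · intro h m'
        obtain ⟨x, r⟩ := m'
        refine (key x r).mpr (h _ ?_)
        exact mem_cliffordVec_iff.mpr ⟨-r, x, by rw [map_neg, neg_add_eq_sub]⟩
    rw [hAB]
    constructor
    · intro h p hp
      have h2 := involute_mem_cliffordVec (h (involute p) (involute_mem_cliffordVec hp))
      rwa [map_mul, map_mul, involute_involute, involute_involute,
        involute_cliffordConj] at h2
    · intro h p hp
      have h2 := involute_mem_cliffordVec (h (involute p) (involute_mem_cliffordVec hp))
      rwa [map_mul, map_mul, involute_involute, involute_reverse_eq_conj] at h2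

end spinTransport


open CliffordAlgebra

variable {R M : Type*} [CommRing R] [AddCommGroup M] [Module R M]
variable (Q : QuadraticForm R M) (H : QuadraticForm R (R × R))

/-- the embedded copy of `M` in the Clifford algebra of `Q.prod H` -/
noncomputable def wv : M →ₗ[R] CliffordAlgebra (Q.prod H) :=
  (ι (Q.prod H)) ∘ₗ LinearMap.inl R M (R × R)

noncomputable def ee : CliffordAlgebra (Q.prod H) := ι (Q.prod H) (0, (1, 0))
noncomputable def ff : CliffordAlgebra (Q.prod H) := ι (Q.prod H) (0, (0, 1))

variable (hH : ∀ y z : R, H (y, z) = y * z)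

section relations
include hH

theorem ee_mul_ee : ee Q H * ee Q H = 0 := by
  rw [ee, ι_sq_scalar, QuadraticMap.prod_apply, hH]
  simp

theorem ff_mul_ff : ff Q H * ff Q H = 0 := by
  rw [ff, ι_sq_scalar, QuadraticMap.prod_apply, hH]
  simp

theorem ff_mul_ee : ff Q H * ee Q H = 1 - ee Q H * ff Q H := by
  have := ι_mul_ι_add_swap (Q := Q.prod H) (0, (1, 0)) (0, (0, 1))
  rw [QuadraticMap.polar, QuadraticMap.prod_apply, QuadraticMap.prod_apply,
    QuadraticMap.prod_apply] at this
  simp only [Prod.mk_add_mk, add_zero, hH] at this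
  rw [← ee, ← ff] at this
  have : ee Q H * ff Q H + ff Q H * ee Q H = algebraMap R _ 1 := by
    convert this using 2; simp
  rw [map_one] at this
  linear_combination (norm := noncomm_ring) this

theorem wv_mul_ee (m : M) : wv Q H m * ee Q H = -(ee Q H * wv Q H m) := by
  have := ι_mul_ι_add_swap (Q := Q.prod H) (m, (0,0)) (0, (1, 0))
  rw [QuadraticMap.polar, QuadraticMap.prod_apply, QuadraticMap.prod_apply,
    QuadraticMap.prod_apply] at this
  simp only [Prod.mk_add_mk, add_zero, zero_add, hH, map_zero] at this
  have h0 : (m, ((0:R),(0:R))) = ((m, 0) : M × R × R) := rfl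
  rw [h0] at this
  rw [← ee] at this
  have hw : ι (Q.prod H) (m, 0) = wv Q H m := rfl
  rw [hw] at this
  simp only [mul_zero, zero_mul, mul_one, sub_self] at this
  have : wv Q H m * ee Q H + ee Q H * wv Q H m = 0 := by
    convert this using 2 <;> simp
  exact eq_neg_of_add_eq_zero_left this

theorem wv_mul_ff (m : M) : wv Q H m * ff Q H = -(ff Q H * wv Q H m) := by
  have := ι_mul_ι_add_swap (Q := Q.prod H) (m, (0,0)) (0, (0, 1))
  rw [QuadraticMap.polar, QuadraticMap.prod_apply, QuadraticMap.prod_apply,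
    QuadraticMap.prod_apply] at this
  simp only [Prod.mk_add_mk, add_zero, zero_add, hH, map_zero] at this
  have h0 : (m, ((0:R),(0:R))) = ((m, 0) : M × R × R) := rfl
  rw [h0] at this
  rw [← ff] at this
  have hw : ι (Q.prod H) (m, 0) = wv Q H m := rfl
  rw [hw] at this
  simp only [mul_zero, zero_mul, mul_one, sub_self] at this
  have : wv Q H m * ff Q H + ff Q H * wv Q H m = 0 := by
    convert this using 2 <;> simp
  exact eq_neg_of_add_eq_zero_left this

theorem wv_mul_wv (m : M) : wv Q H m * wv Q H m = algebraMap R _ (Q m) := by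
  rw [wv, LinearMap.comp_apply, LinearMap.inl_apply, ι_sq_scalar, QuadraticMap.prod_apply,
    map_zero, add_zero]

theorem e_e (x : CliffordAlgebra (Q.prod H)) : ee Q H * (ee Q H * x) = 0 := by
  rw [← mul_assoc, ee_mul_ee Q H hH, zero_mul]

theorem f_f (x : CliffordAlgebra (Q.prod H)) : ff Q H * (ff Q H * x) = 0 := by
  rw [← mul_assoc, ff_mul_ff Q H hH, zero_mul]

theorem f_e (x : CliffordAlgebra (Q.prod H)) :
    ff Q H * (ee Q H * x) = x - ee Q H * (ff Q H * x) := by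
  rw [← mul_assoc, ff_mul_ee Q H hH, sub_mul, one_mul, mul_assoc]

theorem t_pp : (ee Q H * ff Q H) * (ee Q H * ff Q H) = ee Q H * ff Q H := by
  simp [mul_assoc, f_e Q H hH, f_f Q H hH, e_e Q H hH, mul_sub]

theorem t_pe : (ee Q H * ff Q H) * ee Q H = ee Q H := by
  rw [mul_assoc, ff_mul_ee Q H hH, mul_sub, mul_one, e_e Q H hH, sub_zero]

theorem t_pf : (ee Q H * ff Q H) * ff Q H = 0 := by
  rw [mul_assoc, ff_mul_ff Q H hH, mul_zero]

theorem t_pq : (ee Q H * ff Q H) * (ff Q H * ee Q H) = 0 := by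
  rw [mul_assoc, f_f Q H hH, mul_zero]

theorem t_ep : ee Q H * (ee Q H * ff Q H) = 0 := e_e Q H hH _

theorem t_eq : ee Q H * (ff Q H * ee Q H) = ee Q H := by
  rw [← mul_assoc, mul_assoc, ff_mul_ee Q H hH, mul_sub, mul_one, e_e Q H hH, sub_zero]

theorem t_fp : ff Q H * (ee Q H * ff Q H) = ff Q H := by
  rw [f_e Q H hH, ff_mul_ff Q H hH, mul_zero, sub_zero]

theorem t_fq : ff Q H * (ff Q H * ee Q H) = 0 := f_f Q H hH _

theorem t_qp : (ff Q H * ee Q H) * (ee Q H * ff Q H) = 0 := by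
  rw [mul_assoc, e_e Q H hH, mul_zero]

theorem t_qe : (ff Q H * ee Q H) * ee Q H = 0 := by
  rw [mul_assoc, ee_mul_ee Q H hH, mul_zero]

theorem t_qf : (ff Q H * ee Q H) * ff Q H = ff Q H := by
  rw [mul_assoc, t_fp Q H hH]

theorem t_qq : (ff Q H * ee Q H) * (ff Q H * ee Q H) = ff Q H * ee Q H := by
  rw [mul_assoc, f_e Q H hH, f_f Q H hH, mul_zero, sub_zero]

theorem p_add_q : ee Q H * ff Q H + ff Q H * ee Q H = 1 := by
  rw [ff_mul_ee Q H hH]; abel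

theorem wv_comm_p (m : M) :
    wv Q H m * (ee Q H * ff Q H) = ee Q H * ff Q H * wv Q H m := by
  rw [← mul_assoc, wv_mul_ee Q H hH, neg_mul, mul_assoc, wv_mul_ff Q H hH, mul_neg,
    neg_neg, ← mul_assoc]

theorem wv_comm_q (m : M) :
    wv Q H m * (ff Q H * ee Q H) = ff Q H * ee Q H * wv Q H m := by
  rw [← mul_assoc, wv_mul_ff Q H hH, neg_mul, mul_assoc, wv_mul_ee Q H hH, mul_neg,
    neg_neg, ← mul_assoc]

end relations

/-- `D = ee*ff - ff*ee`, the grading operator. -/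
noncomputable def dd : CliffordAlgebra (Q.prod H) := ee Q H * ff Q H - ff Q H * ee Q H

section relations2
include hH

theorem dd_mul_dd : dd Q H * dd Q H = 1 := by
  rw [dd, sub_mul, mul_sub, mul_sub, t_pp Q H hH, t_pq Q H hH, t_qp Q H hH, t_qq Q H hH]
  rw [← p_add_q Q H hH]; abel

theorem wv_comm_dd (m : M) : wv Q H m * dd Q H = dd Q H * wv Q H m := by
  rw [dd, mul_sub, sub_mul, wv_comm_p Q H hH, wv_comm_q Q H hH]

theorem dd_mul_ee : dd Q H * ee Q H = ee Q H := by
  rw [dd, sub_mul, t_pe Q H hH, t_qe Q H hH, sub_zero]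

theorem ee_mul_dd : ee Q H * dd Q H = -ee Q H := by
  rw [dd, mul_sub, t_ep Q H hH, t_eq Q H hH, zero_sub]

theorem dd_mul_ff : dd Q H * ff Q H = -ff Q H := by
  rw [dd, sub_mul, t_pf Q H hH, t_qf Q H hH, zero_sub]

theorem ff_mul_dd : ff Q H * dd Q H = ff Q H := by
  rw [dd, mul_sub, t_fp Q H hH, t_fq Q H hH, sub_zero]

end relations2

/-- the diagonal embedding of `CliffordAlgebra Q` into `CliffordAlgebra (Q.prod H)`,
whose image commutes with `ee` and `ff`. -/
noncomputable def beta (hH : ∀ y z : R, H (y, z) = y * z) :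
    CliffordAlgebra Q →ₐ[R] CliffordAlgebra (Q.prod H) :=
  lift Q ⟨(LinearMap.mulRight R (dd Q H)) ∘ₗ (wv Q H), fun m => by
    show wv Q H m * dd Q H * (wv Q H m * dd Q H) = _
    rw [mul_assoc, ← mul_assoc (dd Q H), ← wv_comm_dd Q H hH, mul_assoc, dd_mul_dd Q H hH,
      mul_one, wv_mul_wv Q H hH]⟩

theorem beta_ι (hH : ∀ y z : R, H (y, z) = y * z) (m : M) :
    beta Q H hH (ι Q m) = wv Q H m * dd Q H :=
  lift_ι_apply _ _ _

section betaSec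
variable (hH : ∀ y z : R, H (y, z) = y * z)

theorem ee_comm_beta (a : CliffordAlgebra Q) :
    ee Q H * beta Q H hH a = beta Q H hH a * ee Q H := by
  induction a using CliffordAlgebra.induction with
  | algebraMap r => rw [AlgHom.commutes, Algebra.commutes]
  | ι m =>
      have hewv : ee Q H * wv Q H m = -(wv Q H m * ee Q H) := by
        rw [wv_mul_ee Q H hH, neg_neg]
      rw [beta_ι, mul_assoc, dd_mul_ee Q H hH, ← mul_assoc, hewv, neg_mul, mul_assoc,
        ee_mul_dd Q H hH, mul_neg, neg_neg]
  | mul a b ha hb => rw [map_mul, ← mul_assoc, ha, mul_assoc, hb, mul_assoc]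
  | add a b ha hb => rw [map_add, mul_add, add_mul, ha, hb]

theorem ff_comm_beta (a : CliffordAlgebra Q) :
    ff Q H * beta Q H hH a = beta Q H hH a * ff Q H := by
  induction a using CliffordAlgebra.induction with
  | algebraMap r => rw [AlgHom.commutes, Algebra.commutes]
  | ι m =>
      have hfwv : ff Q H * wv Q H m = -(wv Q H m * ff Q H) := by
        rw [wv_mul_ff Q H hH, neg_neg]
      rw [beta_ι, mul_assoc, dd_mul_ff Q H hH, mul_neg, ← mul_assoc, hfwv, neg_mul, mul_assoc,
        ff_mul_dd Q H hH]
  | mul a b ha hb => rw [map_mul, ← mul_assoc, ha, mul_assoc, hb, mul_assoc]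
  | add a b ha hb => rw [map_add, mul_add, add_mul, ha, hb]

theorem p_comm_beta (a : CliffordAlgebra Q) :
    (ee Q H * ff Q H) * beta Q H hH a = beta Q H hH a * (ee Q H * ff Q H) := by
  rw [mul_assoc, ff_comm_beta Q H hH, ← mul_assoc, ee_comm_beta Q H hH, mul_assoc]

theorem q_comm_beta (a : CliffordAlgebra Q) :
    (ff Q H * ee Q H) * beta Q H hH a = beta Q H hH a * (ff Q H * ee Q H) := by
  rw [mul_assoc, ee_comm_beta Q H hH, ← mul_assoc, ff_comm_beta Q H hH, mul_assoc]

/-- key rearrangement for proving multiplicativity of the matrix-to-Clifford map -/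
theorem key_mul (a c : CliffordAlgebra Q) (E E' : CliffordAlgebra (Q.prod H))
    (h : E * beta Q H hH c = beta Q H hH c * E) :
    (beta Q H hH a * E) * (beta Q H hH c * E') = beta Q H hH (a * c) * (E * E') := by
  rw [map_mul, mul_assoc, ← mul_assoc E, h, mul_assoc, ← mul_assoc, ← mul_assoc]

theorem km_p (a c : CliffordAlgebra Q) (E' : CliffordAlgebra (Q.prod H)) :
    (beta Q H hH a * (ee Q H * ff Q H)) * (beta Q H hH c * E') =
      beta Q H hH (a * c) * ((ee Q H * ff Q H) * E') :=
  key_mul Q H hH a c _ E' (p_comm_beta Q H hH c)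

theorem km_e (a c : CliffordAlgebra Q) (E' : CliffordAlgebra (Q.prod H)) :
    (beta Q H hH a * ee Q H) * (beta Q H hH c * E') =
      beta Q H hH (a * c) * (ee Q H * E') :=
  key_mul Q H hH a c _ E' (ee_comm_beta Q H hH c)

theorem km_f (a c : CliffordAlgebra Q) (E' : CliffordAlgebra (Q.prod H)) :
    (beta Q H hH a * ff Q H) * (beta Q H hH c * E') =
      beta Q H hH (a * c) * (ff Q H * E') :=
  key_mul Q H hH a c _ E' (ff_comm_beta Q H hH c)

theorem km_q (a c : CliffordAlgebra Q) (E' : CliffordAlgebra (Q.prod H)) :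
    (beta Q H hH a * (ff Q H * ee Q H)) * (beta Q H hH c * E') =
      beta Q H hH (a * c) * ((ff Q H * ee Q H) * E') :=
  key_mul Q H hH a c _ E' (q_comm_beta Q H hH c)

end betaSec

/-- The isomorphism from 2x2 matrices over `CliffordAlgebra Q` to the Clifford algebra of
`Q.prod H`, as an algebra homomorphism. -/
noncomputable def gmap (hH : ∀ y z : R, H (y, z) = y * z) :
    Matrix (Fin 2) (Fin 2) (CliffordAlgebra Q) →ₐ[R] CliffordAlgebra (Q.prod H) where
  toFun X := beta Q H hH (X 0 0) * (ee Q H * ff Q H) + beta Q H hH (X 0 1) * ee Q H +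
    beta Q H hH (X 1 0) * ff Q H + beta Q H hH (X 1 1) * (ff Q H * ee Q H)
  map_one' := by
    simp only [Matrix.one_apply_eq, Matrix.one_apply_ne (by decide : (0 : Fin 2) ≠ 1),
      Matrix.one_apply_ne (by decide : (1 : Fin 2) ≠ 0), map_one, map_zero, one_mul, zero_mul,
      add_zero, zero_add]
    exact p_add_q Q H hH
  map_mul' X Y := by
    simp only [Matrix.mul_apply, Fin.sum_univ_two, map_add]
    simp only [add_mul, mul_add, km_p Q H hH, km_e Q H hH, km_f Q H hH, km_q Q H hH]
    simp only [t_pp Q H hH, t_pe Q H hH, t_pf Q H hH, t_pq Q H hH, t_ep Q H hH,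
      ee_mul_ee Q H hH, t_eq Q H hH, t_fp Q H hH, ff_mul_ff Q H hH, t_fq Q H hH,
      t_qp Q H hH, t_qe Q H hH, t_qf Q H hH, t_qq Q H hH, mul_zero, add_zero, zero_add]
    abel
  map_zero' := by simp only [Matrix.zero_apply, map_zero, zero_mul, add_zero]
  map_add' X Y := by
    simp only [Matrix.add_apply, map_add, add_mul]
    abel
  commutes' r := by
    simp only [Matrix.algebraMap_matrix_apply, if_pos rfl, if_neg (by decide : ¬((0:Fin 2) = 1)),
      if_neg (by decide : ¬((1:Fin 2) = 0)), AlgHom.commutes, map_zero, zero_mul, add_zero,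
      zero_add]
    rw [if_pos trivial, AlgHom.commutes, ← mul_add, p_add_q Q H hH, mul_one]

/-- the vector-to-matrix linear map underlying `linv` -/
noncomputable def lmat : M × (R × R) →ₗ[R] Matrix (Fin 2) (Fin 2) (CliffordAlgebra Q) where
  toFun x := !![ι Q x.1, algebraMap R _ x.2.1; algebraMap R _ x.2.2, -ι Q x.1]
  map_add' x y := by
    ext i j
    fin_cases i <;> fin_cases j <;> simp [Matrix.add_apply, map_add] <;> abel
  map_smul' r x := by
    ext i j
    fin_cases i <;> fin_cases j <;>
      simp [Matrix.smul_apply, Algebra.smul_def]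

theorem lmat_sq (hH : ∀ y z : R, H (y, z) = y * z) (x : M × (R × R)) :
    lmat Q x * lmat Q x = algebraMap R _ ((Q.prod H) x) := by
  obtain ⟨m, y, z⟩ := x
  have h1 : lmat Q (m, (y, z)) = !![ι Q m, algebraMap R _ y; algebraMap R _ z, -ι Q m] := rfl
  rw [h1, Matrix.mul_fin_two]
  have e00 : ι Q m * ι Q m + algebraMap R _ y * algebraMap R _ z
      = algebraMap R (CliffordAlgebra Q) ((Q.prod H) (m, (y, z))) := by
    rw [ι_sq_scalar, ← map_mul, ← map_add, QuadraticMap.prod_apply, hH]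
  have e01 : ι Q m * algebraMap R _ y + algebraMap R _ y * (-ι Q m) = 0 := by
    rw [← Algebra.commutes y (ι Q m), mul_neg, add_neg_cancel]
  have e10 : algebraMap R _ z * ι Q m + (-ι Q m) * algebraMap R _ z = 0 := by
    rw [← Algebra.commutes z (-ι Q m), mul_neg, add_neg_cancel]
  have e11 : algebraMap R _ z * algebraMap R _ y + (-ι Q m) * (-ι Q m)
      = algebraMap R (CliffordAlgebra Q) ((Q.prod H) (m, (y, z))) := by
    rw [neg_mul_neg, ι_sq_scalar, ← map_mul, ← map_add, QuadraticMap.prod_apply, hH,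
      mul_comm z y, add_comm]
  rw [e00, e01, e10, e11]
  ext i j
  fin_cases i <;> fin_cases j <;> simp [Matrix.algebraMap_matrix_apply]

/-- the inverse algebra homomorphism from the Clifford algebra to matrices -/
noncomputable def linv (hH : ∀ y z : R, H (y, z) = y * z) :
    CliffordAlgebra (Q.prod H) →ₐ[R] Matrix (Fin 2) (Fin 2) (CliffordAlgebra Q) :=
  lift (Q.prod H) ⟨lmat Q, lmat_sq Q H hH⟩

/-- the diagonal embedding of an algebra in 2x2 matrices -/
noncomputable def diagEmb : CliffordAlgebra Q →ₐ[R] Matrix (Fin 2) (Fin 2) (CliffordAlgebra Q) where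
  toFun a := Matrix.diagonal (fun _ => a)
  map_one' := by simp [← Matrix.diagonal_one]
  map_mul' a b := by simp [Matrix.diagonal_mul_diagonal]
  map_zero' := by simp
  map_add' a b := by simp [Matrix.diagonal_add]
  commutes' r := by simp [Matrix.algebraMap_eq_diagonal]

theorem diagEmb_apply (a : CliffordAlgebra Q) (i : Fin 2) :
    diagEmb Q a i i = a := by
  show Matrix.diagonal (fun _ => a) i i = a
  rw [Matrix.diagonal_apply_eq]

section linvsec
variable (hH : ∀ y z : R, H (y, z) = y * z)

theorem linv_w (m : M) : linv Q H hH (wv Q H m) = !![ι Q m, 0; 0, -ι Q m] := by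
  rw [wv, LinearMap.comp_apply, LinearMap.inl_apply, linv, lift_ι_apply]
  show (!![ι Q m, algebraMap R _ 0; algebraMap R _ 0, -ι Q m] : Matrix _ _ _) = _
  rw [map_zero]

theorem linv_e : linv Q H hH (ee Q H) = !![0, 1; 0, 0] := by
  rw [ee, linv, lift_ι_apply]
  show (!![ι Q 0, algebraMap R _ 1; algebraMap R _ 0, -ι Q 0] : Matrix _ _ _) = _
  rw [map_zero, map_one, map_zero, neg_zero]

theorem linv_f : linv Q H hH (ff Q H) = !![0, 0; 1, 0] := by
  rw [ff, linv, lift_ι_apply]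
  show (!![ι Q 0, algebraMap R _ 0; algebraMap R _ 1, -ι Q 0] : Matrix _ _ _) = _
  rw [map_zero, map_one, map_zero, neg_zero]

theorem linv_beta (a : CliffordAlgebra Q) :
    linv Q H hH (beta Q H hH a) = diagEmb Q a := by
  have : (linv Q H hH).comp (beta Q H hH) = diagEmb Q := by
    apply CliffordAlgebra.hom_ext
    apply LinearMap.ext
    intro m
    show linv Q H hH (beta Q H hH (ι Q m)) = diagEmb Q (ι Q m)
    rw [beta_ι, map_mul, dd, map_sub, map_mul, map_mul, linv_w, linv_e, linv_f]
    show _ = Matrix.diagonal _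
    ext i j
    fin_cases i <;> fin_cases j <;>
      simp [Matrix.mul_apply, Fin.sum_univ_two, Matrix.sub_apply]
  exact DFunLike.congr_fun this a

theorem linv_gmap (X : Matrix (Fin 2) (Fin 2) (CliffordAlgebra Q)) :
    linv Q H hH (gmap Q H hH X) = X := by
  show linv Q H hH (beta Q H hH (X 0 0) * (ee Q H * ff Q H) + beta Q H hH (X 0 1) * ee Q H +
    beta Q H hH (X 1 0) * ff Q H + beta Q H hH (X 1 1) * (ff Q H * ee Q H)) = X
  rw [map_add, map_add, map_add, map_mul, map_mul, map_mul, map_mul, map_mul, map_mul,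
    linv_beta, linv_beta, linv_beta, linv_beta, linv_e, linv_f]
  conv_rhs => rw [Matrix.eta_fin_two X]
  ext i j
  fin_cases i <;> fin_cases j <;>
    simp [Matrix.mul_apply, Fin.sum_univ_two, Matrix.add_apply, diagEmb, Matrix.diagonal]

theorem gmap_linv (x : CliffordAlgebra (Q.prod H)) :
    gmap Q H hH (linv Q H hH x) = x := by
  have : (gmap Q H hH).comp (linv Q H hH) = AlgHom.id R _ := by
    apply CliffordAlgebra.hom_ext
    apply LinearMap.ext
    intro x
    obtain ⟨m, y, z⟩ := x
    show gmap Q H hH (linv Q H hH (ι (Q.prod H) (m, (y, z)))) = ι (Q.prod H) (m, (y, z))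
    rw [linv, lift_ι_apply]
    show gmap Q H hH !![ι Q m, algebraMap R _ y; algebraMap R _ z, -ι Q m] = _
    show beta Q H hH (ι Q m) * (ee Q H * ff Q H) + beta Q H hH (algebraMap R _ y) * ee Q H +
      beta Q H hH (algebraMap R _ z) * ff Q H + beta Q H hH (-ι Q m) * (ff Q H * ee Q H) = _
    rw [map_neg, neg_mul, AlgHom.commutes, AlgHom.commutes, beta_ι]
    have h1 : wv Q H m * dd Q H * (ee Q H * ff Q H) - wv Q H m * dd Q H * (ff Q H * ee Q H)
        = wv Q H m := by
      rw [← mul_sub, ← dd, mul_assoc, dd_mul_dd Q H hH, mul_one]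
    have h2 : ι (Q.prod H) (m, (y, z)) = wv Q H m + y • ee Q H + z • ff Q H := by
      have h3 : (m, (y, z)) = ((m, 0) : M × R × R) + (y • (0, (1, 0)) : M × R × R)
          + (z • (0, (0, 1)) : M × R × R) := by
        simp [Prod.ext_iff]
      rw [h3, map_add, map_add, map_smul, map_smul]
      rfl
    rw [h2, ← Algebra.smul_def, ← Algebra.smul_def]
    conv_rhs => rw [← h1]
    abel
  exact DFunLike.congr_fun this x

end linvsec

/-- The algebra equivalence between 2x2 matrices over the Clifford algebra of `Q` and the
Clifford algebra of `Q.prod H`. -/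
noncomputable def gequiv (hH : ∀ y z : R, H (y, z) = y * z) :
    Matrix (Fin 2) (Fin 2) (CliffordAlgebra Q) ≃ₐ[R] CliffordAlgebra (Q.prod H) :=
  AlgEquiv.ofAlgHom (gmap Q H hH) (linv Q H hH)
    (AlgHom.ext (gmap_linv Q H hH)) (AlgHom.ext (linv_gmap Q H hH))

section conjTransport
variable (hH : ∀ y z : R, H (y, z) = y * z)
open CliffordAlgebra

theorem reverse_ee : reverse (ee Q H) = ee Q H := reverse_ι _
theorem reverse_ff : reverse (ff Q H) = ff Q H := reverse_ι _
theorem reverse_wv (m : M) : reverse (wv Q H m) = wv Q H m := reverse_ι _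
theorem involute_ee : involute (ee Q H) = -ee Q H := involute_ι _
theorem involute_ff : involute (ff Q H) = -ff Q H := involute_ι _
theorem involute_wv (m : M) : involute (wv Q H m) = -wv Q H m := involute_ι _

theorem reverse_dd : reverse (dd Q H) = -dd Q H := by
  rw [dd, map_sub, reverse.map_mul, reverse.map_mul, reverse_ee, reverse_ff, neg_sub]

theorem involute_dd : involute (dd Q H) = dd Q H := by
  rw [dd, map_sub, map_mul, map_mul, involute_ee, involute_ff, neg_mul_neg, neg_mul_neg]

theorem cliffordConj_involute {N' : Type*} [AddCommGroup N'] [Module R N']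
    {Q₂ : QuadraticForm R N'} (x : CliffordAlgebra Q₂) :
    cliffordConj (involute x) = reverse x := by
  rw [cliffordConj, involute_involute]

theorem reverse_beta (a : CliffordAlgebra Q) :
    reverse (beta Q H hH a) = beta Q H hH (cliffordConj a) := by
  induction a using CliffordAlgebra.induction with
  | algebraMap r => rw [AlgHom.commutes, reverse.commutes, cliffordConj_algebraMap,
      AlgHom.commutes]
  | ι m =>
      rw [beta_ι, reverse.map_mul, reverse_dd, reverse_wv, neg_mul, ← wv_comm_dd Q H hH,
        cliffordConj_ι, map_neg, beta_ι]
  | mul a b ha hb =>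
      rw [map_mul, reverse.map_mul, ha, hb, ← map_mul, cliffordConj_mul]
  | add a b ha hb => rw [map_add, map_add, ha, hb, cliffordConj_add, map_add]

theorem involute_beta (a : CliffordAlgebra Q) :
    involute (beta Q H hH a) = beta Q H hH (involute a) := by
  induction a using CliffordAlgebra.induction with
  | algebraMap r => simp only [AlgHom.commutes]
  | ι m =>
      rw [beta_ι, map_mul, involute_dd, involute_wv, involute_ι, map_neg, beta_ι, neg_mul]
  | mul a b ha hb => rw [map_mul, map_mul, ha, hb, map_mul, map_mul]
  | add a b ha hb => rw [map_add, map_add, ha, hb, map_add, map_add]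

theorem gmap_fin_two (a b c d : CliffordAlgebra Q) :
    gmap Q H hH !![a, b; c, d] = beta Q H hH a * (ee Q H * ff Q H) + beta Q H hH b * ee Q H +
      beta Q H hH c * ff Q H + beta Q H hH d * (ff Q H * ee Q H) := by
  show beta Q H hH (!![a,b;c,d] 0 0) * (ee Q H * ff Q H) + beta Q H hH (!![a,b;c,d] 0 1) * ee Q H +
    beta Q H hH (!![a,b;c,d] 1 0) * ff Q H + beta Q H hH (!![a,b;c,d] 1 1) * (ff Q H * ee Q H) = _
  norm_num

theorem reverse_gmap (a b c d : CliffordAlgebra Q) :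
    reverse (gmap Q H hH !![a, b; c, d]) =
      gmap Q H hH !![cliffordConj d, cliffordConj b; cliffordConj c, cliffordConj a] := by
  rw [gmap_fin_two, gmap_fin_two]
  simp only [map_add, reverse.map_mul, reverse_ee, reverse_ff, reverse_beta Q H hH]
  rw [q_comm_beta Q H hH, p_comm_beta Q H hH, ee_comm_beta Q H hH, ff_comm_beta Q H hH]
  abel

theorem involute_gmap (a b c d : CliffordAlgebra Q) :
    involute (gmap Q H hH !![a, b; c, d]) =
      gmap Q H hH !![involute a, -involute b; -involute c, involute d] := by
  rw [gmap_fin_two, gmap_fin_two]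
  simp only [map_add, map_mul, involute_ee, involute_ff, involute_beta Q H hH, map_neg,
    neg_mul_neg, mul_neg, neg_mul, neg_neg]

theorem conj_gmap (a b c d : CliffordAlgebra Q) :
    cliffordConj (gmap Q H hH !![a, b; c, d]) =
      gmap Q H hH !![reverse d, -reverse b; -reverse c, reverse a] := by
  rw [cliffordConj, involute_gmap, reverse_gmap, cliffordConj_neg, cliffordConj_neg,
    cliffordConj_involute, cliffordConj_involute, cliffordConj_involute, cliffordConj_involute]

theorem conj_scalar_vec (s : R) (m : M) :
    cliffordConj (algebraMap R (CliffordAlgebra Q) s + ι Q m)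
      = algebraMap R (CliffordAlgebra Q) s - ι Q m := by
  rw [cliffordConj_add, cliffordConj_algebraMap, cliffordConj_ι, ← sub_eq_add_neg]

theorem gmap_mem_vec_iff (P : Matrix (Fin 2) (Fin 2) (CliffordAlgebra Q)) :
    gmap Q H hH P ∈ cliffordVec (Q.prod H) ↔
      (P 0 1 ∈ Set.range (algebraMap R (CliffordAlgebra Q)) ∧
       P 1 0 ∈ Set.range (algebraMap R (CliffordAlgebra Q)) ∧
       P 0 0 ∈ cliffordVec Q ∧ P 1 1 = cliffordConj (P 0 0)) := by
  constructor
  · intro h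
    obtain ⟨s, x, hx⟩ := mem_cliffordVec_iff.mp h
    obtain ⟨m, y, z⟩ := x
    have hP : P = linv Q H hH (gmap Q H hH P) := (linv_gmap Q H hH P).symm
    rw [hx, map_add, AlgHom.commutes] at hP
    have hlι : linv Q H hH (ι (Q.prod H) (m, (y, z)))
        = !![ι Q m, algebraMap R _ y; algebraMap R _ z, -ι Q m] := by
      rw [linv, lift_ι_apply]; rfl
    rw [hlι] at hP
    have h01 : P 0 1 = algebraMap R _ y := by
      rw [hP]; simp [Matrix.add_apply, Matrix.algebraMap_matrix_apply]
    have h10 : P 1 0 = algebraMap R _ z := by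
      rw [hP]; simp [Matrix.add_apply, Matrix.algebraMap_matrix_apply]
    have h00 : P 0 0 = algebraMap R _ s + ι Q m := by
      rw [hP]; simp [Matrix.add_apply, Matrix.algebraMap_matrix_apply]
    have h11 : P 1 1 = algebraMap R _ s - ι Q m := by
      rw [hP]; simp [Matrix.add_apply, Matrix.algebraMap_matrix_apply, sub_eq_add_neg]
    refine ⟨⟨y, h01.symm⟩, ⟨z, h10.symm⟩, ?_, ?_⟩
    · rw [h00]; exact mem_cliffordVec_iff.mpr ⟨s, m, rfl⟩
    · rw [h00, h11, conj_scalar_vec]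
  · rintro ⟨⟨y, hy⟩, ⟨z, hz⟩, h00, h11⟩
    obtain ⟨s, m, h00'⟩ := mem_cliffordVec_iff.mp h00
    have hPeq : P = (algebraMap R (Matrix (Fin 2) (Fin 2) (CliffordAlgebra Q)) s) +
        !![ι Q m, algebraMap R _ y; algebraMap R _ z, -ι Q m] := by
      rw [Matrix.eta_fin_two P, h00', h11, h00', conj_scalar_vec, ← hy, ← hz]
      ext i j
      fin_cases i <;> fin_cases j <;>
        simp [Matrix.add_apply, Matrix.algebraMap_matrix_apply, sub_eq_add_neg]
    have hlι : !![ι Q m, algebraMap R _ y; algebraMap R _ z, -ι Q m]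
        = linv Q H hH (ι (Q.prod H) (m, (y, z))) := by
      rw [linv, lift_ι_apply]; rfl
    rw [hPeq, hlι, map_add, AlgHom.commutes, gmap_linv Q H hH]
    exact mem_cliffordVec_iff.mpr ⟨s, (m, (y, z)), rfl⟩

theorem fin_two_eq_iff {α : Type*} {a b c d a' b' c' d' : α} :
    (!![a, b; c, d] : Matrix (Fin 2) (Fin 2) α) = !![a', b'; c', d'] ↔
      a = a' ∧ b = b' ∧ c = c' ∧ d = d' := by
  constructor
  · intro h
    refine ⟨?_, ?_, ?_, ?_⟩
    · simpa using congrFun (congrFun h 0) 0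
    · simpa using congrFun (congrFun h 0) 1
    · simpa using congrFun (congrFun h 1) 0
    · simpa using congrFun (congrFun h 1) 1
  · rintro ⟨rfl, rfl, rfl, rfl⟩
    rfl

theorem gmap_injective : Function.Injective (gmap Q H hH) := fun X Y h => by
  rw [← linv_gmap Q H hH X, h, linv_gmap]

theorem part1_iff (a b c d : CliffordAlgebra Q) :
    gmap Q H hH !![a, b; c, d] * cliffordConj (gmap Q H hH !![a, b; c, d]) = 1 ↔
      (a * reverse d - b * reverse c = 1 ∧ a * reverse b = b * reverse a ∧
        c * reverse d = d * reverse c) := by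
  rw [conj_gmap, ← map_mul, ← map_one (gmap Q H hH), (gmap_injective Q H hH).eq_iff,
    Matrix.mul_fin_two, Matrix.one_fin_two, fin_two_eq_iff]
  constructor
  · rintro ⟨h1, h2, h3, -⟩
    refine ⟨?_, ?_, ?_⟩
    · rw [sub_eq_add_neg, ← mul_neg]; exact h1
    · rw [mul_neg, neg_add_eq_sub, sub_eq_zero] at h2; exact h2.symm
    · rw [mul_neg, ← sub_eq_add_neg, sub_eq_zero] at h3; exact h3
  · rintro ⟨h1, h2, h3⟩
    have h4 : d * reverse a - c * reverse b = 1 := by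
      have h := congrArg (reverse (Q := Q)) h1
      rwa [map_sub, reverse.map_mul, reverse.map_mul, reverse_reverse, reverse_reverse,
        reverse.map_one] at h
    refine ⟨?_, ?_, ?_, ?_⟩
    · rw [mul_neg, ← sub_eq_add_neg]; exact h1
    · rw [mul_neg, neg_add_eq_sub, sub_eq_zero]; exact h2.symm
    · rw [mul_neg, ← sub_eq_add_neg, sub_eq_zero]; exact h3
    · rw [mul_neg, neg_add_eq_sub]; exact h4

theorem expand_entry (a b p q b' a' : CliffordAlgebra Q) (y z : R) :
    (a * p + b * algebraMap R _ z) * b' + (a * algebraMap R _ y + b * q) * a'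
      = (a * p * b' + b * q * a') + algebraMap R _ y * (a * a')
        + algebraMap R _ z * (b * b') := by
  have hy : a * algebraMap R (CliffordAlgebra Q) y = algebraMap R _ y * a :=
    (Algebra.commutes y a).symm
  have hz : b * algebraMap R (CliffordAlgebra Q) z = algebraMap R _ z * b :=
    (Algebra.commutes z b).symm
  rw [add_mul, add_mul, hy, hz, mul_assoc, mul_assoc,
    mul_assoc (algebraMap R (CliffordAlgebra Q) y) a a']
  abel

theorem gmap_fin_two_mem_vec_iff (u v w x : CliffordAlgebra Q) :
    gmap Q H hH !![u, v; w, x] ∈ cliffordVec (Q.prod H) ↔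
      (v ∈ Set.range (algebraMap R (CliffordAlgebra Q)) ∧
       w ∈ Set.range (algebraMap R (CliffordAlgebra Q)) ∧
       u ∈ cliffordVec Q ∧ x = cliffordConj u) := by
  rw [gmap_mem_vec_iff]
  norm_num

theorem part2_iff (a b c d : CliffordAlgebra Q) :
    (∀ p ∈ cliffordVec (Q.prod H),
        gmap Q H hH !![a, b; c, d] * p * reverse (gmap Q H hH !![a, b; c, d])
          ∈ cliffordVec (Q.prod H)) ↔
      (a * cliffordConj a ∈ Set.range (algebraMap R (CliffordAlgebra Q)) ∧
       b * cliffordConj b ∈ Set.range (algebraMap R (CliffordAlgebra Q)) ∧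
       c * cliffordConj c ∈ Set.range (algebraMap R (CliffordAlgebra Q)) ∧
       d * cliffordConj d ∈ Set.range (algebraMap R (CliffordAlgebra Q)) ∧
       a * cliffordConj c ∈ cliffordVec Q ∧
       b * cliffordConj d ∈ cliffordVec Q ∧
       (∀ x ∈ cliffordVec Q,
         a * x * cliffordConj b + b * cliffordConj x * cliffordConj a ∈
           Set.range (algebraMap R (CliffordAlgebra Q)) ∧
         c * x * cliffordConj d + d * cliffordConj x * cliffordConj c ∈
           Set.range (algebraMap R (CliffordAlgebra Q))) ∧
       (∀ x ∈ cliffordVec Q,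
         a * x * cliffordConj d + b * cliffordConj x * cliffordConj c ∈ cliffordVec Q)) := by
  constructor
  · intro h
    have key : ∀ P : Matrix (Fin 2) (Fin 2) (CliffordAlgebra Q),
        gmap Q H hH P ∈ cliffordVec (Q.prod H) →
        gmap Q H hH (!![a, b; c, d] * P *
          !![cliffordConj d, cliffordConj b; cliffordConj c, cliffordConj a])
            ∈ cliffordVec (Q.prod H) := by
      intro P hP
      have h2 := h _ hP
      rwa [reverse_gmap, ← map_mul, ← map_mul] at h2
    have hP1 : gmap Q H hH !![(0 : CliffordAlgebra Q), 1; 0, 0] ∈ cliffordVec (Q.prod H) :=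
      (gmap_fin_two_mem_vec_iff Q H hH _ _ _ _).mpr
        ⟨⟨1, map_one _⟩, ⟨0, map_zero _⟩, Submodule.zero_mem _, by rw [cliffordConj_zero]⟩
    have hP2 : gmap Q H hH !![(0 : CliffordAlgebra Q), 0; 1, 0] ∈ cliffordVec (Q.prod H) :=
      (gmap_fin_two_mem_vec_iff Q H hH _ _ _ _).mpr
        ⟨⟨0, map_zero _⟩, ⟨1, map_one _⟩, Submodule.zero_mem _, by rw [cliffordConj_zero]⟩
    have hprod1 : !![a, b; c, d] * !![(0 : CliffordAlgebra Q), 1; 0, 0] *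
        !![cliffordConj d, cliffordConj b; cliffordConj c, cliffordConj a] =
        !![a * cliffordConj c, a * cliffordConj a; c * cliffordConj c, c * cliffordConj a] := by
      rw [Matrix.mul_fin_two, Matrix.mul_fin_two]
      refine fin_two_eq_iff.mpr ⟨?_, ?_, ?_, ?_⟩ <;> simp
    have hprod2 : !![a, b; c, d] * !![(0 : CliffordAlgebra Q), 0; 1, 0] *
        !![cliffordConj d, cliffordConj b; cliffordConj c, cliffordConj a] =
        !![b * cliffordConj d, b * cliffordConj b; d * cliffordConj d, d * cliffordConj b] := by
      rw [Matrix.mul_fin_two, Matrix.mul_fin_two]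
      refine fin_two_eq_iff.mpr ⟨?_, ?_, ?_, ?_⟩ <;> simp
    have k1 := key _ hP1
    rw [hprod1, gmap_fin_two_mem_vec_iff] at k1
    have k2 := key _ hP2
    rw [hprod2, gmap_fin_two_mem_vec_iff] at k2
    refine ⟨k1.1, k2.1, k1.2.1, k2.2.1, k1.2.2.1, k2.2.2.1, ?_, ?_⟩
    · intro x hx
      have hP3 : gmap Q H hH !![x, 0; 0, cliffordConj x] ∈ cliffordVec (Q.prod H) :=
        (gmap_fin_two_mem_vec_iff Q H hH _ _ _ _).mpr
          ⟨⟨0, map_zero _⟩, ⟨0, map_zero _⟩, hx, rfl⟩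
      have hprod3 : !![a, b; c, d] * !![x, 0; 0, cliffordConj x] *
          !![cliffordConj d, cliffordConj b; cliffordConj c, cliffordConj a] =
          !![a * x * cliffordConj d + b * cliffordConj x * cliffordConj c,
             a * x * cliffordConj b + b * cliffordConj x * cliffordConj a;
             c * x * cliffordConj d + d * cliffordConj x * cliffordConj c,
             c * x * cliffordConj b + d * cliffordConj x * cliffordConj a] := by
        rw [Matrix.mul_fin_two, Matrix.mul_fin_two]
        refine fin_two_eq_iff.mpr ⟨?_, ?_, ?_, ?_⟩ <;> simp
      have k3 := key _ hP3
      rw [hprod3, gmap_fin_two_mem_vec_iff] at k3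
      exact ⟨k3.1, k3.2.1⟩
    · intro x hx
      have hP3 : gmap Q H hH !![x, 0; 0, cliffordConj x] ∈ cliffordVec (Q.prod H) :=
        (gmap_fin_two_mem_vec_iff Q H hH _ _ _ _).mpr
          ⟨⟨0, map_zero _⟩, ⟨0, map_zero _⟩, hx, rfl⟩
      have hprod3 : !![a, b; c, d] * !![x, 0; 0, cliffordConj x] *
          !![cliffordConj d, cliffordConj b; cliffordConj c, cliffordConj a] =
          !![a * x * cliffordConj d + b * cliffordConj x * cliffordConj c,
             a * x * cliffordConj b + b * cliffordConj x * cliffordConj a;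
             c * x * cliffordConj d + d * cliffordConj x * cliffordConj c,
             c * x * cliffordConj b + d * cliffordConj x * cliffordConj a] := by
        rw [Matrix.mul_fin_two, Matrix.mul_fin_two]
        refine fin_two_eq_iff.mpr ⟨?_, ?_, ?_, ?_⟩ <;> simp
      have k3 := key _ hP3
      rw [hprod3, gmap_fin_two_mem_vec_iff] at k3
      exact k3.2.2.1
  · rintro ⟨h4, h5, h6, h7, h8, h9, h10, h11⟩ p hp
    have hp2 : p = gmap Q H hH (linv Q H hH p) := (gmap_linv Q H hH p).symm
    have hprops := (gmap_mem_vec_iff Q H hH (linv Q H hH p)).mp (by rwa [gmap_linv])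
    obtain ⟨⟨y, hy⟩, ⟨z, hz⟩, h00, h11'⟩ := hprops
    set p0 := linv Q H hH p 0 0 with hp0
    have hPeta : linv Q H hH p =
        !![p0, algebraMap R _ y; algebraMap R _ z, cliffordConj p0] := by
      have he := Matrix.eta_fin_two (linv Q H hH p)
      rw [← hy, ← hz, h11'] at he
      exact he
    rw [hp2, reverse_gmap, ← map_mul, ← map_mul, hPeta, Matrix.mul_fin_two, Matrix.mul_fin_two,
      expand_entry Q a b p0 (cliffordConj p0) (cliffordConj d) (cliffordConj c) y z,
      expand_entry Q a b p0 (cliffordConj p0) (cliffordConj b) (cliffordConj a) y z,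
      expand_entry Q c d p0 (cliffordConj p0) (cliffordConj d) (cliffordConj c) y z,
      expand_entry Q c d p0 (cliffordConj p0) (cliffordConj b) (cliffordConj a) y z,
      gmap_fin_two_mem_vec_iff]
    refine ⟨?_, ?_, ?_, ?_⟩
    · obtain ⟨r1, hr1⟩ := (h10 p0 h00).1
      obtain ⟨r2, hr2⟩ := h4
      obtain ⟨r3, hr3⟩ := h5
      exact ⟨r1 + y * r2 + z * r3, by rw [map_add, map_add, map_mul, map_mul, hr1, hr2, hr3]⟩
    · obtain ⟨r1, hr1⟩ := (h10 p0 h00).2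
      obtain ⟨r2, hr2⟩ := h6
      obtain ⟨r3, hr3⟩ := h7
      exact ⟨r1 + y * r2 + z * r3, by rw [map_add, map_add, map_mul, map_mul, hr1, hr2, hr3]⟩
    · refine Submodule.add_mem _ (Submodule.add_mem _ (h11 p0 h00) ?_) ?_
      · rw [← Algebra.smul_def]
        exact Submodule.smul_mem _ y h8
      · rw [← Algebra.smul_def]
        exact Submodule.smul_mem _ z h9
    · have hcy : algebraMap R (CliffordAlgebra Q) y * (c * cliffordConj a)
          = c * (cliffordConj a * algebraMap R _ y) := by
        rw [Algebra.commutes, mul_assoc]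
      have hcz : algebraMap R (CliffordAlgebra Q) z * (d * cliffordConj b)
          = d * (cliffordConj b * algebraMap R _ z) := by
        rw [Algebra.commutes, mul_assoc]
      simp only [cliffordConj_add, cliffordConj_mul, cliffordConj_conj, cliffordConj_algebraMap,
        mul_assoc]
      rw [hcy, hcz]
      abel

end conjTransport

end Sl2Spin

theorem exceptional_isomorphism_sl2_spin {R M : Type*} [CommRing R] [AddCommGroup M]
    [Module R M] (Q : QuadraticForm R M)
    (H : QuadraticForm R (R × R)) (hH : ∀ y z : R, H (y, z) = y * z)
    (N : QuadraticForm R R) (hN : ∀ t : R, N t = -t ^ 2) :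
    ∃ ψ : Matrix (Fin 2) (Fin 2) (CliffordAlgebra Q) ≃ₐ[R]
        CliffordAlgebra.even ((Q.prod H).prod N),
      ∀ a b c d : CliffordAlgebra Q,
        sl2Cond Q a b c d ↔ spinMem ((Q.prod H).prod N) (ψ !![a, b; c, d]) := by
  obtain rfl : N = -QuadraticMap.sq := by
    ext t
    rw [hN, QuadraticMap.neg_apply, QuadraticMap.sq_apply]
    ring
  refine ⟨(Sl2Spin.gequiv Q H hH).trans (CliffordAlgebra.equivEven (Q.prod H)), ?_⟩
  intro a b c d
  have hψ : ((Sl2Spin.gequiv Q H hH).trans (CliffordAlgebra.equivEven (Q.prod H))) !![a, b; c, d]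
      = CliffordAlgebra.equivEven (Q.prod H) (Sl2Spin.gmap Q H hH !![a, b; c, d]) := rfl
  rw [hψ, Sl2Spin.spinMem_equivEven_iff]
  unfold sl2Cond
  constructor
  · rintro ⟨h1, h2, h3, rest⟩
    exact ⟨(Sl2Spin.part1_iff Q H hH a b c d).mpr ⟨h1, h2, h3⟩,
      (Sl2Spin.part2_iff Q H hH a b c d).mpr rest⟩
  · rintro ⟨hp1, hp2⟩
    obtain ⟨h1, h2, h3⟩ := (Sl2Spin.part1_iff Q H hH a b c d).mp hp1
    exact ⟨h1, h2, h3, (Sl2Spin.part2_iff Q H hH a b c d).mp hp2⟩
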